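/- Let (G, v₀) be a multiplayer quantitative reachability game, T the unraveling of G from v₀, and d ∈ ℕ. Then there exists a subgame perfect secure equilibrium in the finite truncated game 𝒯^d. -/

import Mathlib

open scoped Classical ENat

/-- A multiplayer quantitative reachability game: a finite directed graph whose
vertices are partitioned among the players (via `owner`), every vertex has an
outgoing edge, and each player `i` has a nonempty goal set `F i`. -/
structure QRGame (ι V : Type) where
  owner : V → ι
  E : V → V → Prop
  total : ∀ v, ∃ w, E v w
  F : ι → Set V
  F_ne : ∀ i, (F i).Nonempty

namespace QRGame

variable {ι V : Type}

/-- Histories are encoded as *reversed* nonempty lists: the head is the current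
vertex, the last element is the initial vertex `v₀`, and consecutive elements
are joined by edges of the graph. -/
def IsHist (G : QRGame ι V) (v₀ : V) : List V → Prop
  | [] => False
  | [v] => v = v₀
  | v :: w :: t => G.E w v ∧ IsHist G v₀ (w :: t)

/-- The current (i.e. most recent) vertex of a history. -/
def cur (v₀ : V) (h : List V) : V := h.headD v₀

/-- `σ` is a valid strategy of player `i`: on every history whose current
vertex belongs to player `i`, it chooses a successor along an edge. -/
def IsStrat (G : QRGame ι V) (v₀ : V) (i : ι) (σ : List V → V) : Prop :=
  ∀ h : List V, G.IsHist v₀ h → G.owner (cur v₀ h) = i → G.E (cur v₀ h) (σ h)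

/-- A strategy profile: one valid strategy for each player. -/
def IsProfile (G : QRGame ι V) (v₀ : V) (σ : ι → List V → V) : Prop :=
  ∀ i, G.IsStrat v₀ i (σ i)

/-- The history reached after `n` further steps when all players follow the
profile `σ` from the history `h` on. -/
def histFrom (G : QRGame ι V) (v₀ : V) (σ : ι → List V → V) (h : List V) : ℕ → List V
  | 0 => h
  | n + 1 =>
      σ (G.owner (cur v₀ (histFrom G v₀ σ h n))) (histFrom G v₀ σ h n)
        :: histFrom G v₀ σ h n

/-- The full play (indexed from time `0`) whose prefix is the history `h` and
which is consistent with the profile `σ` after `h`. -/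
def fullPlay (G : QRGame ι V) (v₀ : V) (σ : ι → List V → V) (h : List V) (t : ℕ) : V :=
  (G.histFrom v₀ σ h t).reverse.getD t v₀

/-- The outcome `⟨(σ_i)⟩_{v₀}` of the profile `σ` from the initial vertex. -/
def outcome (G : QRGame ι V) (v₀ : V) (σ : ι → List V → V) : ℕ → V :=
  G.fullPlay v₀ σ [v₀]

/-- Cost of player `i` for a play `ρ`: the least `l` with `ρ l ∈ F i`,
and `⊤` (i.e. `+∞`) if there is no such `l`. -/
noncomputable def cost (G : QRGame ι V) (i : ι) (ρ : ℕ → V) : ℕ∞ :=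
  ⨅ l ∈ {l : ℕ | ρ l ∈ G.F i}, (l : ℕ∞)

/-- Cost of player `i` for the finite prefix `ρ₀ … ρ_{m-1}` of a play. -/
noncomputable def costLT (G : QRGame ι V) (i : ι) (ρ : ℕ → V) (m : ℕ) : ℕ∞ :=
  ⨅ l ∈ {l : ℕ | l < m ∧ ρ l ∈ G.F i}, (l : ℕ∞)

end QRGame

/-- The preference relation `≺_j` of player `j` on cost profiles:
`x ≺_j y` iff `x j > y j`, or `x j = y j`, every player's cost does not
decrease, and some player's cost strictly increases. -/
def Prec {ι : Type} (j : ι) (x y : ι → ℕ∞) : Prop :=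
  y j < x j ∨ (x j = y j ∧ (∀ i, x i ≤ y i) ∧ ∃ i, x i < y i)

namespace QRGame

variable {ι V : Type} [DecidableEq ι]

/-- `σ` restricted after the history `h` is a secure equilibrium in the subgame
`(G|_h, cur h)`: no player `j` has a `≺_j`-profitable deviation after `h`
(costs are computed on the whole play, including the prefix `h`). -/
def IsSecureAfter (G : QRGame ι V) (v₀ : V) (σ : ι → List V → V) (h : List V) : Prop :=
  ¬ ∃ (j : ι) (σ' : List V → V), G.IsStrat v₀ j σ' ∧
      Prec j (fun i => G.cost i (G.fullPlay v₀ σ h))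
        (fun i => G.cost i (G.fullPlay v₀ (Function.update σ j σ') h))

/-- A secure equilibrium in `(G, v₀)`. -/
def IsSecure (G : QRGame ι V) (v₀ : V) (σ : ι → List V → V) : Prop :=
  G.IsSecureAfter v₀ σ [v₀]

/-- A subgame perfect secure equilibrium: a secure equilibrium in every subgame. -/
def IsSPSE (G : QRGame ι V) (v₀ : V) (σ : ι → List V → V) : Prop :=
  ∀ h : List V, G.IsHist v₀ h → G.IsSecureAfter v₀ σ h

end QRGame

namespace QRGame

variable {ι V : Type}

/-- `σ` is a valid strategy of player `i` in the truncated game `𝒯^d` played on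
the truncation of the unraveling of `G` to depth `d`: it chooses a successor
along an edge on every history of length (number of edges) `< d`, i.e. on every
history whose list of vertices has length `≤ d`. -/
def IsStratTrunc (G : QRGame ι V) (v₀ : V) (d : ℕ) (i : ι) (σ : List V → V) : Prop :=
  ∀ h : List V, G.IsHist v₀ h → h.length ≤ d →
    G.owner (cur v₀ h) = i → G.E (cur v₀ h) (σ h)

end QRGame

namespace QRGame

variable {ι V : Type} [DecidableEq ι]

/-- `σ` restricted after the history `h` is a secure equilibrium in the subgame
of the truncated game `𝒯^d` after `h`: costs are computed on the prefix of the
play of length `d` (vertices of indices `0, …, d`). -/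
def IsSecureTruncAfter (G : QRGame ι V) (v₀ : V) (d : ℕ)
    (σ : ι → List V → V) (h : List V) : Prop :=
  ¬ ∃ (j : ι) (σ' : List V → V), G.IsStratTrunc v₀ d j σ' ∧
      Prec j (fun i => G.costLT i (G.fullPlay v₀ σ h) (d + 1))
        (fun i => G.costLT i (G.fullPlay v₀ (Function.update σ j σ') h) (d + 1))

/-- A secure equilibrium in the truncated game `𝒯^d`. -/
def IsSecureTrunc (G : QRGame ι V) (v₀ : V) (d : ℕ) (σ : ι → List V → V) : Prop :=
  G.IsSecureTruncAfter v₀ d σ [v₀]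

/-- A subgame perfect secure equilibrium in the truncated game `𝒯^d`: a secure
equilibrium in the subgame after every history of the truncated tree. -/
def IsSPSETrunc (G : QRGame ι V) (v₀ : V) (d : ℕ) (σ : ι → List V → V) : Prop :=
  ∀ h : List V, G.IsHist v₀ h → h.length ≤ d + 1 → G.IsSecureTruncAfter v₀ d σ h

end QRGame

/-!
Backward induction in the finite tree `𝒯^d`, with each player ranking outcomes by a linear
refinement of `≺_j`: first by their own cost, then by the total of all players' costs, the larger
total being preferred (costs are capped at `d + 1` first, so that one infinite cost does not absorb
the total). A `≺_j`-profitable deviation strictly improves this score, while backward induction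
makes the score of the outcome optimal against every unilateral deviation, after every history.
-/

namespace ENat

noncomputable def capToNat (n : ℕ) (t : ℕ∞) : ℕ := (min t n).toNat

theorem capToNat_mono (n : ℕ) : Monotone (capToNat n) := fun _ _ hts =>
  ENat.toNat_le_toNat (min_le_min_right _ hts) (by simp)

theorem capToNat_lt_capToNat {n : ℕ} {t s : ℕ∞} (hts : t < s) (htn : t < n) :
    capToNat n t < capToNat n s := by
  lift t to ℕ using htn.ne_top
  unfold capToNat
  rw [min_eq_left htn.le]
  induction s using ENat.recTopCoe with
  | top => simpa using htn
  | coe s =>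
    norm_cast at hts htn
    rw [← Nat.mono_cast.map_min, ENat.toNat_natCast, ENat.toNat_natCast]
    omega

end ENat

noncomputable def secScore {ι : Type} [Fintype ι] (n : ℕ) (j : ι) (x : ι → ℕ∞) :
    ℕ∞ ×ₗ ℕᵒᵈ :=
  toLex (x j, OrderDual.toDual (∑ i, ENat.capToNat n (x i)))

theorem secScore_lt_of_prec {ι : Type} [Fintype ι] {n : ℕ} {j : ι} {x y : ι → ℕ∞}
    (hx : ∀ i, x i < ⊤ → x i < n) (h : Prec j x y) : secScore n j y < secScore n j x := by
  rw [secScore, secScore, Prod.Lex.toLex_lt_toLex]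
  rcases h with hj | ⟨hj, hle, i, hi⟩
  · exact Or.inl hj
  · refine Or.inr ⟨hj.symm, OrderDual.toDual_lt_toDual.2 ?_⟩
    exact Finset.sum_lt_sum (fun k _ => ENat.capToNat_mono n (hle k))
      ⟨i, Finset.mem_univ i, ENat.capToNat_lt_capToNat hi (hx i (hi.trans_le le_top))⟩

namespace QRGame

variable {ι V : Type} {v₀ : V}

theorem IsHist.ne_nil {G : QRGame ι V} {h : List V} (hh : G.IsHist v₀ h) : h ≠ [] := by
  rintro rfl
  exact hh

theorem IsHist.cons {G : QRGame ι V} {h : List V} {w : V} (hh : G.IsHist v₀ h)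
    (hw : G.E (cur v₀ h) w) :
    G.IsHist v₀ (w :: h) := by
  cases h with
  | nil => exact hh.elim
  | cons v t => exact ⟨hw, hh⟩

variable (G : QRGame ι V)

theorem costLT_congr {i : ι} {m : ℕ} {ρ ρ' : ℕ → V} (hρ : ∀ l < m, ρ l = ρ' l) :
    G.costLT i ρ m = G.costLT i ρ' m := by
  unfold costLT
  refine iInf_congr fun l => iInf_congr_Prop ?_ fun _ => rfl
  exact and_congr_right fun hl => by rw [hρ l hl]

theorem costLT_lt_of_lt_top {i : ι} {ρ : ℕ → V} {m : ℕ} (h : G.costLT i ρ m < ⊤) :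
    G.costLT i ρ m < m := by
  obtain ⟨l, hl, -⟩ : ∃ l, (l < m ∧ ρ l ∈ G.F i) ∧ (l : ℕ∞) < ⊤ := by
    simpa [costLT, iInf_lt_iff] using h
  exact (iInf₂_le l hl).trans_lt (by exact_mod_cast hl.1)

variable (v₀) (σ : ι → List V → V)

theorem histFrom_add (h : List V) (n m : ℕ) :
    G.histFrom v₀ σ h (n + m) = G.histFrom v₀ σ (G.histFrom v₀ σ h m) n := by
  induction n with
  | zero => rw [Nat.zero_add]; rfl
  | succ n ih => rw [Nat.add_right_comm, histFrom, ih]; rfl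

theorem histFrom_succ' (h : List V) (n : ℕ) :
    G.histFrom v₀ σ h (n + 1) = G.histFrom v₀ σ (σ (G.owner (cur v₀ h)) h :: h) n :=
  G.histFrom_add v₀ σ h n 1

theorem histFrom_length (h : List V) (n : ℕ) :
    (G.histFrom v₀ σ h n).length = h.length + n := by
  induction n with
  | zero => rfl
  | succ n ih => rw [histFrom, List.length_cons, ih, Nat.add_assoc]

theorem exists_histFrom_eq_append (h : List V) (n : ℕ) :
    ∃ a, G.histFrom v₀ σ h n = a ++ h := by
  induction n with
  | zero => exact ⟨[], rfl⟩
  | succ n ih =>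
    obtain ⟨a, ha⟩ := ih
    exact ⟨_ :: a, by rw [histFrom, ha, List.cons_append]⟩

variable {v₀ σ}

theorem getD_reverse_histFrom_of_le {h : List V} {t k n : ℕ} (hkn : k ≤ n)
    (ht : t < h.length + k) :
    (G.histFrom v₀ σ h n).reverse.getD t v₀ =
      (G.histFrom v₀ σ h k).reverse.getD t v₀ := by
  obtain ⟨a, ha⟩ := G.exists_histFrom_eq_append v₀ σ (G.histFrom v₀ σ h k) (n - k)
  rw [← Nat.sub_add_cancel hkn, histFrom_add, ha, List.reverse_append]
  exact List.getD_append _ _ _ _ (by rwa [List.length_reverse, histFrom_length])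

theorem fullPlay_eq_getD {h : List V} (hne : h ≠ []) {t n : ℕ} (ht : t < h.length + n) :
    G.fullPlay v₀ σ h t = (G.histFrom v₀ σ h n).reverse.getD t v₀ := by
  have hpos : 0 < h.length := List.length_pos_iff.2 hne
  rcases le_total t n with htn | hnt
  · exact (G.getD_reverse_histFrom_of_le htn (by omega)).symm
  · exact G.getD_reverse_histFrom_of_le hnt ht

theorem costLT_fullPlay {h : List V} (hne : h ≠ []) {n m : ℕ} (hm : h.length + n = m) (i : ι) :
    G.costLT i (G.fullPlay v₀ σ h) m =
      G.costLT i (fun t => (G.histFrom v₀ σ h n).reverse.getD t v₀) m :=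
  G.costLT_congr fun _ hl => G.fullPlay_eq_getD hne (by omega)

section BackwardInduction

variable [Finite V] {α : Type*} [LinearOrder α]

noncomputable def argminSucc (c : V) (f : V → α) : V :=
  (Set.exists_min_image {w | G.E c w} f (Set.toFinite _) (G.total c)).choose

theorem E_argminSucc (c : V) (f : V → α) : G.E c (G.argminSucc c f) :=
  (Set.exists_min_image {w | G.E c w} f (Set.toFinite _) (G.total c)).choose_spec.1

theorem argminSucc_le {c w : V} (f : V → α) (hw : G.E c w) : f (G.argminSucc c f) ≤ f w :=
  (Set.exists_min_image {w | G.E c w} f (Set.toFinite _) (G.total c)).choose_spec.2 w hw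

variable (v₀) (s : ι → List V → α)

noncomputable def backwardExtend : ℕ → List V → List V
  | 0, h => h
  | n + 1, h =>
    backwardExtend n
      (G.argminSucc (cur v₀ h) (fun w => s (G.owner (cur v₀ h)) (backwardExtend n (w :: h)))
        :: h)

/-- A history of `h.length` vertices is followed by `d - h.length` further moves, so that plays
end with `d + 1` vertices. -/
noncomputable def backwardInduction (d : ℕ) : ι → List V → V := fun _ h =>
  G.argminSucc (cur v₀ h)
    (fun w => s (G.owner (cur v₀ h)) (G.backwardExtend v₀ s (d - h.length) (w :: h)))

variable {v₀ s}

theorem E_backwardInduction (d : ℕ) (i : ι) (h : List V) :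
    G.E (cur v₀ h) (G.backwardInduction v₀ s d i h) :=
  G.E_argminSucc _ _

theorem backwardInduction_le {d n : ℕ} {h : List V} (hn : h.length + n = d) (i : ι) {w : V}
    (hw : G.E (cur v₀ h) w) :
    s (G.owner (cur v₀ h)) (G.backwardExtend v₀ s n (G.backwardInduction v₀ s d i h :: h)) ≤
      s (G.owner (cur v₀ h)) (G.backwardExtend v₀ s n (w :: h)) := by
  obtain rfl : n = d - h.length := by omega
  exact G.argminSucc_le (fun w => s _ (G.backwardExtend v₀ s _ (w :: h))) hw

theorem histFrom_backwardInduction {d n : ℕ} {h : List V} (hn : h.length + n = d + 1) :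
    G.histFrom v₀ (G.backwardInduction v₀ s d) h n = G.backwardExtend v₀ s n h := by
  induction n generalizing h with
  | zero => rfl
  | succ n ih =>
    rw [histFrom_succ', ih (by simp only [List.length_cons]; omega)]
    obtain rfl : n = d - h.length := by omega
    rfl

theorem score_backwardInduction_le [DecidableEq ι] {d : ℕ} {j : ι} {σ' : List V → V}
    (hσ' : G.IsStratTrunc v₀ d j σ') {n : ℕ} {h : List V} (hh : G.IsHist v₀ h)
    (hn : h.length + n = d + 1) :
    s j (G.histFrom v₀ (G.backwardInduction v₀ s d) h n) ≤
      s j (G.histFrom v₀ (Function.update (G.backwardInduction v₀ s d) j σ') h n) := by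
  induction n generalizing h with
  | zero => exact le_rfl
  | succ n ih =>
    have hlen (w : V) : (w :: h).length + n = d + 1 := by simp only [List.length_cons]; omega
    rw [histFrom_succ', histFrom_succ']
    by_cases ho : G.owner (cur v₀ h) = j
    · have hw : G.E (cur v₀ h) (σ' h) := hσ' h hh (by omega) ho
      have hopt := G.backwardInduction_le (s := s) (by omega : h.length + n = d) j hw
      rw [ho] at hopt
      rw [ho, Function.update_self]
      calc s j (G.histFrom v₀ (G.backwardInduction v₀ s d)
              (G.backwardInduction v₀ s d j h :: h) n)
          = s j (G.backwardExtend v₀ s n (G.backwardInduction v₀ s d j h :: h)) := by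
            rw [G.histFrom_backwardInduction (hlen _)]
        _ ≤ s j (G.backwardExtend v₀ s n (σ' h :: h)) := hopt
        _ = s j (G.histFrom v₀ (G.backwardInduction v₀ s d) (σ' h :: h) n) := by
            rw [G.histFrom_backwardInduction (hlen _)]
        _ ≤ _ := ih (hh.cons hw) (hlen _)
    · rw [Function.update_of_ne ho]
      exact ih (hh.cons (G.E_backwardInduction d _ h)) (hlen _)

end BackwardInduction

end QRGame

/-- For every multiplayer quantitative reachability game `(G, v₀)` and every
depth `d`, there exists a subgame perfect secure equilibrium in the finite game
`𝒯^d` played on the truncation of the unraveling of `G` from `v₀` to depth `d`. -/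
theorem exists_spse_truncated
    {ι V : Type} [Fintype ι] [Fintype V] [DecidableEq ι]
    (G : QRGame ι V) (v₀ : V) (d : ℕ) :
    ∃ σ : ι → List V → V, (∀ i, G.IsStratTrunc v₀ d i (σ i)) ∧
      G.IsSPSETrunc v₀ d σ := by
  let s : ι → List V → ℕ∞ ×ₗ ℕᵒᵈ := fun j l =>
    secScore (d + 1) j fun i => G.costLT i (fun t => l.reverse.getD t v₀) (d + 1)
  refine ⟨G.backwardInduction v₀ s d, fun i h _ _ _ => G.E_backwardInduction d i h, ?_⟩
  rintro h hh hlen ⟨j, σ', hσ', hprec⟩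
  obtain ⟨n, hn⟩ : ∃ n, h.length + n = d + 1 := ⟨d + 1 - h.length, by omega⟩
  have hle := G.score_backwardInduction_le (s := s) hσ' hh hn
  simp only [s, ← G.costLT_fullPlay (hh.ne_nil) hn] at hle
  exact (secScore_lt_of_prec (fun i => G.costLT_lt_of_lt_top) hprec).not_ge hle
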